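/- Let H be a connected hierarchical hypergraph (i.e., for all vertices x,y: E(x) ⊆ E(y) or E(y) ⊆ E(x) or E(x) ∩ E(y) = ∅) and let F be a subset of vertices such that whenever E(x) ⊊ E(y) and x ∈ F then y ∈ F. If F is nonempty, then there exists a vertex v ∈ F that is contained in every hyperedge of H. -/

import Mathlib

/-- The set of hyperedges of `H` that contain the vertex `x`. -/
def edgesOf {V : Type*} (H : Set (Set V)) (x : V) : Set (Set V) :=
  {e ∈ H | x ∈ e}

/-- Two vertices are adjacent in the hypergraph `H` if some hyperedge contains both. -/
def hgAdj {V : Type*} (H : Set (Set V)) (x y : V) : Prop :=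
  ∃ e ∈ H, x ∈ e ∧ y ∈ e

/-!
Choose `v ∈ F` whose set of hyperedges `E(v)` is maximal among the vertices of `F`. Since `F` is
closed upwards under strict inclusion of hyperedge sets, `E(v)` is then maximal among all vertices.
Walking along a path from `v`, hierarchy keeps every vertex `y` reached with `E(y) ⊆ E(v)`: the
edge shared with the previous vertex lies in `E(v)`, so `E(v)` and `E(y)` meet, and `E(v) ⊂ E(y)`
is excluded by maximality. By connectivity `E(y) ⊆ E(v)` for all `y`, so every (nonempty) hyperedge
contains `v`.
-/

section

variable {V : Type*}

def IsHierarchical (H : Set (Set V)) : Prop :=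
  ∀ x y : V, edgesOf H x ⊆ edgesOf H y ∨ edgesOf H y ⊆ edgesOf H x ∨
    edgesOf H x ∩ edgesOf H y = ∅

theorem exists_mem_forall_not_edgesOf_ssubset [Finite V] (H : Set (Set V)) {F : Set V}
    (hF : ∀ x y : V, edgesOf H x ⊂ edgesOf H y → x ∈ F → y ∈ F) (hFne : F.Nonempty) :
    ∃ v ∈ F, ∀ y : V, ¬ edgesOf H v ⊂ edgesOf H y := by
  obtain ⟨v, hvF, hvmax⟩ := F.toFinite.exists_maximalFor (edgesOf H) F hFne
  exact ⟨v, hvF, fun y hlt => hlt.2 (hvmax (hF v y hlt hvF) hlt.1)⟩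

theorem edgesOf_subset_of_reflTransGen {H : Set (Set V)} (hhier : IsHierarchical H) {v : V}
    (hmax : ∀ y : V, ¬ edgesOf H v ⊂ edgesOf H y) {y : V}
    (hpath : Relation.ReflTransGen (hgAdj H) v y) : edgesOf H y ⊆ edgesOf H v := by
  induction hpath with
  | refl => rfl
  | @tail b c _ hbc ih =>
    obtain ⟨e, heH, hbe, hce⟩ := hbc
    have he_v : e ∈ edgesOf H v := ih ⟨heH, hbe⟩
    have he_c : e ∈ edgesOf H c := ⟨heH, hce⟩
    rcases hhier v c with hvc | hcv | hdisj
    · exact (hvc.eq_of_not_ssubset (hmax c)).ge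
    · exact hcv
    · exact (Set.eq_empty_iff_forall_notMem.mp hdisj e ⟨he_v, he_c⟩).elim

theorem forall_mem_of_forall_edgesOf_subset {H : Set (Set V)} (hedge_ne : ∀ e ∈ H, e.Nonempty)
    {v : V} (hv : ∀ y : V, edgesOf H y ⊆ edgesOf H v) : ∀ e ∈ H, v ∈ e := by
  intro e he
  obtain ⟨w, hw⟩ := hedge_ne e he
  exact (hv w ⟨he, hw⟩).2

end

theorem stmt_2_general {V : Type*} [Finite V] (H : Set (Set V))
    (hedge_ne : ∀ e ∈ H, e.Nonempty)
    (hconn : ∀ x y : V, Relation.ReflTransGen (hgAdj H) x y)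
    (hhier : ∀ x y : V,
      edgesOf H x ⊆ edgesOf H y ∨ edgesOf H y ⊆ edgesOf H x ∨
        edgesOf H x ∩ edgesOf H y = ∅)
    (F : Set V)
    (hF : ∀ x y : V, edgesOf H x ⊂ edgesOf H y → x ∈ F → y ∈ F)
    (hFne : F.Nonempty) :
    ∃ v ∈ F, ∀ e ∈ H, v ∈ e := by
  obtain ⟨v, hvF, hmax⟩ := exists_mem_forall_not_edgesOf_ssubset H hF hFne
  refine ⟨v, hvF, forall_mem_of_forall_edgesOf_subset hedge_ne fun y => ?_⟩
  exact edgesOf_subset_of_reflTransGen hhier hmax (hconn v y)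

theorem stmt_2 {V : Type*} [Finite V] (H : Set (Set V)) (hfin : H.Finite)
    (hne : H.Nonempty)
    (hedge_ne : ∀ e ∈ H, e.Nonempty)
    (hconn : ∀ x y : V, Relation.ReflTransGen (hgAdj H) x y)
    (hhier : ∀ x y : V,
      edgesOf H x ⊆ edgesOf H y ∨ edgesOf H y ⊆ edgesOf H x ∨
        edgesOf H x ∩ edgesOf H y = ∅)
    (F : Set V)
    (hF : ∀ x y : V, edgesOf H x ⊂ edgesOf H y → x ∈ F → y ∈ F)
    (hFne : F.Nonempty) :
    ∃ v ∈ F, ∀ e ∈ H, v ∈ e :=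
  stmt_2_general H hedge_ne hconn hhier F hF hFne
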